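/- Let A₁ and A₂ be (not necessarily regular) edge sets in a finite directed acyclic graph with source s such that mincut(s,A₁) < mincut(s,A₂), and let CUT_{A₁}, CUT_{A₂} be their respective primary minimum cuts. Then A₁ ≺ A₂ if and only if CUT_{A₁} ≺ CUT_{A₂}. -/

import Mathlib

open Finset

/-- Consecutive edges in the list match head-to-tail. -/
def EChain {V E : Type*} (tl hd : E → V) (p : List E) : Prop :=
  p.Chain' (fun d e => hd d = tl e)

/-- A (nonempty) directed path of edges starting at node `s`. -/
def PathFrom {V E : Type*} (tl hd : E → V) (s : V) (p : List E) : Prop :=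
  p ≠ [] ∧ EChain tl hd p ∧ ∀ e ∈ p.head?, tl e = s

/-- The directed graph is acyclic: no nonempty edge-chain returns to its start. -/
def Acyclic {V E : Type*} (tl hd : E → V) : Prop :=
  ∀ p : List E, p ≠ [] → EChain tl hd p →
    ∀ d ∈ p.head?, ∀ e ∈ p.getLast?, hd e ≠ tl d

/-- `B` separates the edge set `A` from `s`: every directed path from `s`
ending with an edge of `A` passes through an edge of `B` (i.e. `B` is a cut
between `s` and `A`). -/
def Separates {V E : Type*} (tl hd : E → V) (s : V) (A B : Finset E) : Prop :=
  ∀ p : List E, PathFrom tl hd s p → (∃ e ∈ p.getLast?, e ∈ A) → ∃ b ∈ B, b ∈ p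

/-- The minimum cut capacity between `s` and the edge set `A`. -/
noncomputable def mincut {V E : Type*} [Fintype E] (tl hd : E → V) (s : V)
    (A : Finset E) : ℕ :=
  sInf {n | ∃ B : Finset E, Separates tl hd s A B ∧ B.card = n}

/-- `B` is a minimum cut between `s` and the edge set `A`. -/
def IsMinCut {V E : Type*} [Fintype E] (tl hd : E → V) (s : V) (A B : Finset E) : Prop :=
  Separates tl hd s A B ∧ B.card = mincut tl hd s A

/-- An edge set is regular if its cardinality equals its minimum cut capacity from `s`. -/
def Regular {V E : Type*} [Fintype E] (tl hd : E → V) (s : V) (A : Finset E) : Prop :=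
  A.card = mincut tl hd s A

/-- `A ∼ A'`: the two edge sets have a common minimum cut from `s`. -/
def EquivSets {V E : Type*} [Fintype E] (tl hd : E → V) (s : V) (A A' : Finset E) : Prop :=
  ∃ C : Finset E, IsMinCut tl hd s A C ∧ IsMinCut tl hd s A' C

/-- `A₁ ≺ A₂`: `|A₁| < |A₂|` and some minimum cut between `s` and `A₂`
also separates `A₁` from `s`. -/
def Dominates {V E : Type*} [Fintype E] (tl hd : E → V) (s : V) (A₁ A₂ : Finset E) : Prop :=
  A₁.card < A₂.card ∧
    ∃ C : Finset E, IsMinCut tl hd s A₂ C ∧ Separates tl hd s A₁ C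

/-- A directed path of edges from node `s` to node `t`. -/
def NPathFromTo {V E : Type*} (tl hd : E → V) (s t : V) (p : List E) : Prop :=
  PathFrom tl hd s p ∧ ∀ e ∈ p.getLast?, hd e = t

/-- `B` is a cut between the nodes `s` and `t`. -/
def NSeparates {V E : Type*} (tl hd : E → V) (s t : V) (B : Finset E) : Prop :=
  ∀ p : List E, NPathFromTo tl hd s t p → ∃ b ∈ B, b ∈ p

/-- The minimum cut capacity between the nodes `s` and `t`. -/
noncomputable def nmincut {V E : Type*} [Fintype E] (tl hd : E → V) (s t : V) : ℕ :=
  sInf {n | ∃ B : Finset E, NSeparates tl hd s t B ∧ B.card = n}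

/-- `B` is a minimum cut between the nodes `s` and `t`. -/
def IsNodeMinCut {V E : Type*} [Fintype E] (tl hd : E → V) (s t : V) (B : Finset E) : Prop :=
  NSeparates tl hd s t B ∧ B.card = nmincut tl hd s t

/-- `d ≤ e` for edges: there is a directed path starting with `d` and ending with `e`
(in particular `d ≤ d`). -/
def EdgeLe {V E : Type*} (tl hd : E → V) (d e : E) : Prop :=
  ∃ p : List E, EChain tl hd p ∧ p.head? = some d ∧ p.getLast? = some e

/-- A family of pairwise edge-disjoint paths. -/
def EdgeDisjoint {E : Type*} {n : ℕ} (P : Fin n → List E) : Prop :=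
  ∀ i j, i ≠ j → List.Disjoint (P i) (P j)

/-- The primary minimum cut between nodes `s` and `t`: a minimum cut separating
every minimum cut between `s` and `t` from `s`. -/
def IsPrimaryNodeMinCut {V E : Type*} [Fintype E] (tl hd : E → V) (s t : V)
    (C : Finset E) : Prop :=
  IsNodeMinCut tl hd s t C ∧
    ∀ C' : Finset E, IsNodeMinCut tl hd s t C' → Separates tl hd s C' C

/-- The primary minimum cut between `s` and an edge set `A`. -/
def IsPrimaryMinCut {V E : Type*} [Fintype E] (tl hd : E → V) (s : V)
    (A C : Finset E) : Prop :=
  IsMinCut tl hd s A C ∧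
    ∀ C' : Finset E, IsMinCut tl hd s A C' → Separates tl hd s C' C

/-- The equivalence class (within the collection `𝒜`) of the wiretap set `A`
under the relation `∼`. -/
def ClassOf {V E : Type*} [Fintype E] (tl hd : E → V) (s : V)
    (𝒜 : Finset (Finset E)) (A : Finset E) : Set (Finset E) :=
  {A' | A' ∈ 𝒜 ∧ EquivSets tl hd s A A'}

/-- Domination amongst (distinct) equivalence classes: some common minimum cut of all
the sets in `C₂` separates every set in `C₁` from `s`. -/
def ClDominates {V E : Type*} [Fintype E] (tl hd : E → V) (s : V)
    (C₁ C₂ : Set (Finset E)) : Prop :=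
  C₁ ≠ C₂ ∧ ∃ CUT : Finset E,
    (∀ A ∈ C₂, IsMinCut tl hd s A CUT) ∧ (∀ A ∈ C₁, Separates tl hd s A CUT)

/-!
The forward direction is an uncrossing argument. Let `C` be a minimum cut of `A₂` separating `A₁`,
and let `R(X)` be the set of edges reachable from `s` avoiding `X`. The edge boundary `∂` is
submodular, and `∂ R(X) ⊆ X`, so
`|∂(R C ∩ R C₁)| + |∂(R C ∪ R C₁)| ≤ |C| + |C₁| = mincut A₂ + mincut A₁`.
The union term separates `A₁`, so it has size at least `mincut A₁`; hence `∂(R C ∩ R C₁)` is a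
minimum cut of `A₂`. It separates `C₁` from `s` and is separated from `s` by the primary cut `C₂`,
so `C₂` separates `C₁`. The converse is transitivity of separation.
-/

def reach {V E : Type*} (tl hd : E → V) (s : V) (B : Finset E) : Set E :=
  {e | ∃ p : List E, PathFrom tl hd s p ∧ p.getLast? = some e ∧ ∀ x ∈ p, x ∉ B}

noncomputable def boundary {V E : Type*} [Fintype E] (tl hd : E → V) (s : V) (S : Set E) :
    Finset E :=
  (Set.toFinite {e | e ∉ S ∧ (tl e = s ∨ ∃ d ∈ S, hd d = tl e)}).toFinset

section Cuts

variable {V E : Type*} {tl hd : E → V} {s : V}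

theorem PathFrom.of_append {p q : List E} (h : PathFrom tl hd s (p ++ q)) (hp : p ≠ []) :
    PathFrom tl hd s p := by
  obtain ⟨-, hch, hst⟩ := h
  refine ⟨hp, hch.left_of_append, fun x hx => hst x ?_⟩
  rwa [List.head?_append_of_ne_nil _ hp]

theorem PathFrom.concat {p : List E} {d e : E} (hp : PathFrom tl hd s p)
    (hpd : p.getLast? = some d) (hde : hd d = tl e) : PathFrom tl hd s (p ++ [e]) := by
  obtain ⟨hne, hch, hst⟩ := hp
  refine ⟨by simp, hch.append (List.isChain_singleton e) ?_, fun x hx => hst x ?_⟩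
  · intro x hx y hy
    simp_all
  · rwa [List.head?_append_of_ne_nil _ hne] at hx

theorem PathFrom.exists_prefix {p : List E} (hp : PathFrom tl hd s p) {e : E} (he : e ∈ p) :
    ∃ q, PathFrom tl hd s q ∧ q.getLast? = some e ∧ ∀ x ∈ q, x ∈ p := by
  obtain ⟨l, r, rfl⟩ := List.mem_iff_append.mp he
  rw [← List.singleton_append, ← List.append_assoc] at hp
  refine ⟨l ++ [e], hp.of_append (by simp), by simp, fun x hx => ?_⟩
  simp only [List.mem_append, List.mem_cons] at hx ⊢
  tauto

theorem PathFrom.mem_reach {B : Finset E} {p : List E} (hp : PathFrom tl hd s p)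
    (hpB : ∀ x ∈ p, x ∉ B) {e : E} (he : e ∈ p) : e ∈ reach tl hd s B := by
  obtain ⟨q, hq, hqe, hqp⟩ := hp.exists_prefix he
  exact ⟨q, hq, hqe, fun x hx => hpB x (hqp x hx)⟩

theorem separates_iff_forall_notMem_reach {A B : Finset E} :
    Separates tl hd s A B ↔ ∀ a ∈ A, a ∉ reach tl hd s B := by
  constructor
  · rintro h a ha ⟨p, hp, hpa, hpB⟩
    obtain ⟨b, hb, hbp⟩ := h p hp ⟨a, hpa, ha⟩
    exact hpB b hbp hb
  · rintro h p hp ⟨a, hpa, ha⟩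
    by_contra! hpB
    exact h a ha ⟨p, hp, hpa, fun x hx hxB => hpB x hxB hx⟩

theorem separates_refl (A : Finset E) : Separates tl hd s A A := by
  rintro p - ⟨a, hpa, ha⟩
  exact ⟨a, ha, List.mem_of_getLast? hpa⟩

theorem notMem_reach_of_mem {B : Finset E} {b : E} (hb : b ∈ B) : b ∉ reach tl hd s B :=
  separates_iff_forall_notMem_reach.mp (separates_refl B) b hb

theorem Separates.trans {A B C : Finset E} (hAB : Separates tl hd s A B)
    (hBC : Separates tl hd s B C) : Separates tl hd s A C := by
  refine separates_iff_forall_notMem_reach.mpr fun a ha ⟨p, hp, hpa, hpC⟩ => ?_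
  obtain ⟨b, hb, hbp⟩ := hAB p hp ⟨a, hpa, ha⟩
  exact separates_iff_forall_notMem_reach.mp hBC b hb (hp.mem_reach hpC hbp)

variable [Fintype E]

theorem mem_boundary {S : Set E} {e : E} :
    e ∈ boundary tl hd s S ↔ e ∉ S ∧ (tl e = s ∨ ∃ d ∈ S, hd d = tl e) := by
  simp [boundary]

theorem EChain.forall_mem_of_forall_notMem_boundary {S : Set E} {p : List E}
    (hp : EChain tl hd p) (hstart : ∀ x ∈ p.head?, tl x = s ∨ ∃ d ∈ S, hd d = tl x)
    (hpS : ∀ x ∈ p, x ∉ boundary tl hd s S) : ∀ x ∈ p, x ∈ S := by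
  induction p with
  | nil => simp
  | cons a t ih =>
    have ha : a ∈ S := by
      by_contra ha
      exact hpS a List.mem_cons_self (mem_boundary.mpr ⟨ha, hstart a rfl⟩)
    rintro x (_ | ⟨_, hx⟩)
    · exact ha
    · refine ih hp.tail (fun y hy => Or.inr ⟨a, ha, (List.isChain_cons.mp hp).1 y hy⟩)
        (fun y hy => hpS y (List.mem_cons_of_mem a hy)) x hx

theorem separates_boundary {A : Finset E} {S : Set E} (hAS : ∀ a ∈ A, a ∉ S) :
    Separates tl hd s A (boundary tl hd s S) := by
  rintro p hp ⟨a, hpa, ha⟩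
  by_contra! hpS
  exact hAS a ha (EChain.forall_mem_of_forall_notMem_boundary hp.2.1
    (fun x hx => Or.inl (hp.2.2 x hx)) (fun x hx hxS => hpS x hxS hx) a
    (List.mem_of_getLast? hpa))

theorem boundary_reach_subset (B : Finset E) : boundary tl hd s (reach tl hd s B) ⊆ B := by
  intro e he
  obtain ⟨hne, hstart⟩ := mem_boundary.mp he
  by_contra heB
  refine hne ?_
  rcases hstart with hs | ⟨d, ⟨p, hp, hpd, hpB⟩, hde⟩
  · exact ⟨[e], ⟨by simp, List.isChain_singleton e, by simpa using hs⟩, rfl, by simpa using heB⟩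
  · refine ⟨p ++ [e], hp.concat hpd hde, List.getLast?_concat, fun x hx => ?_⟩
    rcases List.mem_append.mp hx with hx | hx
    · exact hpB x hx
    · rwa [List.mem_singleton.mp hx]

theorem card_boundary_inter_add_card_boundary_union_le (S T : Set E) :
    #(boundary tl hd s (S ∩ T)) + #(boundary tl hd s (S ∪ T)) ≤
      #(boundary tl hd s S) + #(boundary tl hd s T) := by
  classical
  have h_union : boundary tl hd s (S ∩ T) ∪ boundary tl hd s (S ∪ T) ⊆
      boundary tl hd s S ∪ boundary tl hd s T := by
    intro e
    simp only [Finset.mem_union, mem_boundary, Set.mem_inter_iff, Set.mem_union]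
    grind
  have h_inter : boundary tl hd s (S ∩ T) ∩ boundary tl hd s (S ∪ T) ⊆
      boundary tl hd s S ∩ boundary tl hd s T := by
    intro e
    simp only [Finset.mem_inter, mem_boundary, Set.mem_inter_iff, Set.mem_union]
    grind
  rw [← card_union_add_card_inter, ← card_union_add_card_inter (boundary tl hd s S)]
  exact Nat.add_le_add (card_le_card h_union) (card_le_card h_inter)

theorem separates_univ (A : Finset E) : Separates tl hd s A univ := by
  rintro p hp -
  obtain ⟨x, hx⟩ := List.exists_mem_of_ne_nil p hp.1
  exact ⟨x, mem_univ x, hx⟩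

theorem mincut_le_card {A B : Finset E} (h : Separates tl hd s A B) :
    mincut tl hd s A ≤ #B :=
  Nat.sInf_le ⟨B, h, rfl⟩

theorem le_mincut {A : Finset E} {n : ℕ} (h : ∀ B, Separates tl hd s A B → n ≤ #B) :
    n ≤ mincut tl hd s A :=
  le_csInf ⟨_, univ, separates_univ A, rfl⟩ (by rintro m ⟨B, hB, rfl⟩; exact h B hB)

theorem IsMinCut.mincut_eq {A C : Finset E} (h : IsMinCut tl hd s A C) :
    mincut tl hd s C = mincut tl hd s A :=
  le_antisymm ((mincut_le_card (separates_refl C)).trans h.2.le)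
    (le_mincut fun _ hB => h.2 ▸ mincut_le_card (h.1.trans hB))

theorem IsMinCut.isMinCut_self {A C : Finset E} (h : IsMinCut tl hd s A C) :
    IsMinCut tl hd s C C :=
  ⟨separates_refl C, h.2.trans h.mincut_eq.symm⟩

theorem IsMinCut.trans {A C D : Finset E} (hC : IsMinCut tl hd s A C)
    (hD : IsMinCut tl hd s C D) : IsMinCut tl hd s A D :=
  ⟨hC.1.trans hD.1, hD.2.trans hC.mincut_eq⟩

theorem isMinCut_boundary_reach_inter {A₁ A₂ C₁ C : Finset E} (hC₁ : IsMinCut tl hd s A₁ C₁)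
    (hC : IsMinCut tl hd s A₂ C) (hA₁C : Separates tl hd s A₁ C) :
    IsMinCut tl hd s A₂ (boundary tl hd s (reach tl hd s C ∩ reach tl hd s C₁)) := by
  set R := reach tl hd s
  set bd := boundary tl hd s
  have h_inter : Separates tl hd s A₂ (bd (R C ∩ R C₁)) :=
    separates_boundary fun a ha haK => separates_iff_forall_notMem_reach.mp hC.1 a ha haK.1
  have h_union : Separates tl hd s A₁ (bd (R C ∪ R C₁)) :=
    separates_boundary fun a ha haU => haU.elim
      (separates_iff_forall_notMem_reach.mp hA₁C a ha)
      (separates_iff_forall_notMem_reach.mp hC₁.1 a ha)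
  refine ⟨h_inter, le_antisymm (Nat.le_of_add_le_add_right (b := mincut tl hd s A₁) ?_)
    (mincut_le_card h_inter)⟩
  calc #(bd (R C ∩ R C₁)) + mincut tl hd s A₁
      ≤ #(bd (R C ∩ R C₁)) + #(bd (R C ∪ R C₁)) := Nat.add_le_add_left (mincut_le_card h_union) _
    _ ≤ #(bd (R C)) + #(bd (R C₁)) := card_boundary_inter_add_card_boundary_union_le _ _
    _ ≤ #C + #C₁ :=
      Nat.add_le_add (card_le_card (boundary_reach_subset C))
        (card_le_card (boundary_reach_subset C₁))
    _ = mincut tl hd s A₂ + mincut tl hd s A₁ := by rw [hC.2, hC₁.2]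

end Cuts

theorem dominates_iff_primary_dominates_general {V E : Type*} [Fintype E]
    (tl hd : E → V) (s : V)
    (A₁ A₂ : Finset E) (hlt : mincut tl hd s A₁ < mincut tl hd s A₂)
    (C₁ C₂ : Finset E)
    (hC₁ : IsPrimaryMinCut tl hd s A₁ C₁) (hC₂ : IsPrimaryMinCut tl hd s A₂ C₂) :
    (∃ C : Finset E, IsMinCut tl hd s A₂ C ∧ Separates tl hd s A₁ C) ↔
      Dominates tl hd s C₁ C₂ := by
  constructor
  · rintro ⟨C, hC, hA₁C⟩
    refine ⟨by rw [hC₁.1.2, hC₂.1.2]; exact hlt, C₂, hC₂.1.isMinCut_self, ?_⟩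
    have hK := isMinCut_boundary_reach_inter hC₁.1 hC hA₁C
    have hC₁K : Separates tl hd s C₁ (boundary tl hd s (reach tl hd s C ∩ reach tl hd s C₁)) :=
      separates_boundary fun c hc hcK => notMem_reach_of_mem hc hcK.2
    exact hC₁K.trans (hC₂.2 _ hK)
  · rintro ⟨-, D, hD, hC₁D⟩
    exact ⟨D, hC₂.1.trans hD, hC₁.1.1.trans hC₁D⟩

/-- for (not necessarily regular) edge sets with
`mincut(s,A₁) < mincut(s,A₂)`, `A₁ ≺ A₂` (some minimum cut of `A₂` separates
`A₁` from `s`) iff `CUT_{A₁} ≺ CUT_{A₂}` for their primary minimum cuts. -/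
theorem dominates_iff_primary_dominates {V E : Type*} [Fintype E]
    (tl hd : E → V) (s : V)
    (hacy : Acyclic tl hd) (hsrc : ∀ e : E, hd e ≠ s)
    (A₁ A₂ : Finset E) (hlt : mincut tl hd s A₁ < mincut tl hd s A₂)
    (C₁ C₂ : Finset E)
    (hC₁ : IsPrimaryMinCut tl hd s A₁ C₁) (hC₂ : IsPrimaryMinCut tl hd s A₂ C₂) :
    (∃ C : Finset E, IsMinCut tl hd s A₂ C ∧ Separates tl hd s A₁ C) ↔
      Dominates tl hd s C₁ C₂ :=
  dominates_iff_primary_dominates_general tl hd s A₁ A₂ hlt C₁ C₂ hC₁ hC₂
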